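/- arXiv:0812.2192 — 4 statements merged into one kernel-verified Lean document; each statement's English description precedes it below -/
import Mathlib

section
/- Every torsion-free virtually cyclic group is cyclic: if G is a group in which every non-identity element has infinite order, and G has a cyclic subgroup of finite index, then G itself is cyclic. -/
/-!
Let `⟨a⟩` be the normal core of the given cyclic subgroup. Inside the centralizer `C` of `a`,
the subgroup `⟨a⟩` is central of finite index, so the transfer `C → Z(C)`,
`g ↦ g ^ [C : Z(C)]`, sends commutators to `1`; torsion-freeness makes `C` abelian, and then
`x ↦ x ^ [C : ⟨a⟩]` embeds `C` into `⟨a⟩`, so `C` is cyclic. Every `g` conjugates `a` to `a`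
or `a⁻¹`. If `g` inverts `a`, then `a` and `g²` lie in the cyclic group `C`, so some
`a ^ m = (g²) ^ t` is both inverted and fixed by `g`, which forces `g² = 1` and then `a = 1`.
Hence `a` is central, and the same argument gives `G` cyclic.
-/

open Subgroup
open scoped commutatorElement

theorem CommGroup.isCyclic_of_finiteIndex {G : Type*} [CommGroup G]
    (htf : ∀ g : G, g ≠ 1 → ¬ IsOfFinOrder g) (K : Subgroup G) [IsCyclic K] [K.FiniteIndex] :
    IsCyclic G := by
  have : IsMulTorsionFree G := isMulTorsionFree_iff_not_isOfFinOrder.mpr htf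
  exact isCyclic_of_injective ((powMonoidHom K.index).codRestrict K K.pow_index_mem)
    fun x y hxy => IsMulTorsionFree.pow_left_injective FiniteIndex.index_ne_zero
      (congrArg Subtype.val hxy)

section

variable {G : Type*} [Group G]

open scoped IsMulCommutative in
theorem isMulCommutative_of_finiteIndex_center (htf : ∀ g : G, g ≠ 1 → ¬ IsOfFinOrder g)
    [(center G).FiniteIndex] : IsMulCommutative G := by
  refine IsMulCommutative.of_comm fun x y => ?_
  have hpow : ⁅x, y⁆ ^ (center G).index = 1 := by
    rw [← MonoidHom.transferCenterPow_apply, map_commutatorElement,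
      commutatorElement_eq_one_iff_mul_comm.mpr (mul_comm _ _), OneMemClass.coe_one]
  by_contra hxy
  refine htf _ (mt commutatorElement_eq_one_iff_mul_comm.mp hxy) ?_
  exact isOfFinOrder_iff_pow_eq_one.mpr ⟨_, Nat.pos_of_ne_zero FiniteIndex.index_ne_zero, hpow⟩

open scoped IsMulCommutative in
theorem isCyclic_of_finiteIndex_of_le_center (htf : ∀ g : G, g ≠ 1 → ¬ IsOfFinOrder g)
    (K : Subgroup G) [IsCyclic K] [K.FiniteIndex] (hK : K ≤ center G) : IsCyclic G := by
  have : (center G).FiniteIndex := finiteIndex_of_le hK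
  have : IsMulCommutative G := isMulCommutative_of_finiteIndex_center htf
  exact CommGroup.isCyclic_of_finiteIndex htf K

theorem isCyclic_centralizer_of_finiteIndex (htf : ∀ g : G, g ≠ 1 → ¬ IsOfFinOrder g)
    (K : Subgroup G) [IsCyclic K] [K.FiniteIndex] : IsCyclic (centralizer (K : Set G)) := by
  have hle : K ≤ centralizer K := le_centralizer K
  have : IsCyclic (K.subgroupOf (centralizer K)) :=
    isCyclic_of_injective (subgroupOfEquivOfLe hle).toMonoidHom
      (subgroupOfEquivOfLe hle).injective
  refine isCyclic_of_finiteIndex_of_le_center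
    (fun g hg hfin => htf g (by simpa using hg) (Submonoid.isOfFinOrder_coe.mpr hfin))
    (K.subgroupOf (centralizer K)) fun x hx => mem_center_iff.mpr fun y => ?_
  exact Subtype.ext (mem_centralizer_iff.mp y.2 x (mem_subgroupOf.mp hx)).symm

theorem conj_eq_self_or_inv_of_normal_zpowers (htf : ∀ g : G, g ≠ 1 → ¬ IsOfFinOrder g)
    {a : G} [(zpowers a).Normal] (g : G) : g * a * g⁻¹ = a ∨ g * a * g⁻¹ = a⁻¹ := by
  rcases eq_or_ne a 1 with rfl | ha
  · simp
  obtain ⟨m, hm⟩ := mem_zpowers_iff.mp (Normal.conj_mem ‹_› a (mem_zpowers a) g)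
  obtain ⟨k, hk⟩ := mem_zpowers_iff.mp (Normal.conj_mem ‹_› a (mem_zpowers a) g⁻¹)
  have hkm : a ^ (k * m) = a ^ (1 : ℤ) := by
    rw [zpow_mul, hk, conj_zpow, hm]; group
  rcases Int.eq_one_or_neg_one_of_mul_eq_one
    ((mul_comm k m).symm.trans (injective_zpow_iff_not_isOfFinOrder.mpr (htf a ha) hkm))
    with rfl | rfl
  · exact .inl (by simpa using hm.symm)
  · exact .inr (by simpa using hm.symm)

theorem eq_one_of_conj_eq_inv_of_mem_isCyclic (htf : ∀ g : G, g ≠ 1 → ¬ IsOfFinOrder g)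
    {a g : G} (C : Subgroup G) [IsCyclic C] (ha : a ∈ C) (hg : g ^ 2 ∈ C)
    (hinv : g * a * g⁻¹ = a⁻¹) : a = 1 := by
  by_contra ha1
  have hinj := injective_zpow_iff_not_isOfFinOrder.mpr (htf a ha1)
  obtain ⟨b, rfl⟩ := (C.isCyclic_iff_exists_zpowers_eq_top).mp ‹_›
  obtain ⟨t, ht⟩ := mem_zpowers_iff.mp ha
  obtain ⟨m, hm⟩ := mem_zpowers_iff.mp hg
  have hpow : a ^ m = (g ^ 2) ^ t := by rw [← ht, ← hm, ← zpow_mul, ← zpow_mul, mul_comm]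
  have hm0 : m = 0 := by
    have : a ^ (-m) = a ^ m :=
      calc a ^ (-m) = (g * a * g⁻¹) ^ m := by rw [hinv, inv_zpow']
        _ = g * (g ^ 2) ^ t * g⁻¹ := by rw [conj_zpow, hpow]
        _ = a ^ m := by rw [hpow]; group
    have := hinj this
    omega
  have hg1 : g = 1 := by
    by_contra hg1
    exact htf g hg1
      (isOfFinOrder_iff_pow_eq_one.mpr ⟨2, two_pos, by rw [← hm, hm0, zpow_zero]⟩)
  have := hinj (show a ^ (1 : ℤ) = a ^ (-1 : ℤ) by simpa [hg1] using hinv)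
  omega

end

/-- Every torsion-free virtually cyclic group is cyclic: if every non-identity element of
`G` has infinite order and `G` has a cyclic subgroup of finite index, then `G` is cyclic. -/
theorem torsionFree_virtuallyCyclic_isCyclic (G : Type*) [Group G]
    (htf : ∀ g : G, g ≠ 1 → ¬ IsOfFinOrder g)
    (H : Subgroup G) (hcyc : IsCyclic H) (hfin : H.FiniteIndex) :
    IsCyclic G := by
  obtain ⟨a, ha⟩ :=
    (H.normalCore.isCyclic_iff_exists_zpowers_eq_top).mp (isCyclic_of_le H.normalCore_le)
  have : (zpowers a).Normal := ha ▸ H.normalCore_normal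
  have : (zpowers a).FiniteIndex := ha ▸ H.finiteIndex_normalCore
  have : IsCyclic (centralizer {a}) := by
    have := isCyclic_centralizer_of_finiteIndex htf (zpowers a)
    rwa [zpowers_eq_closure, centralizer_closure] at this
  have hcentral : a ∈ center G := by
    refine mem_center_iff.mpr fun g => ?_
    rcases conj_eq_self_or_inv_of_normal_zpowers htf (a := a) g with h | hinv
    · exact mul_inv_eq_iff_eq_mul.mp h
    have hg2 : g ^ 2 ∈ centralizer {a} := mem_centralizer_singleton_iff.mpr <|
      calc g ^ 2 * a = g * (g * a * g⁻¹) * g⁻¹ * g ^ 2 := by rw [sq]; group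
        _ = g * a⁻¹ * g⁻¹ * g ^ 2 := by rw [hinv]
        _ = (g * a * g⁻¹)⁻¹ * g ^ 2 := by group
        _ = a * g ^ 2 := by rw [hinv, inv_inv]
    rw [eq_one_of_conj_eq_inv_of_mem_isCyclic htf _ (mem_centralizer_singleton_iff.mpr rfl) hg2
      hinv, mul_one, one_mul]
  exact isCyclic_of_finiteIndex_of_le_center htf (zpowers a) (zpowers_le.mpr hcentral)
end

section
/- Every nontrivial cyclic subgroup K of the discrete Heisenberg group Γ₃ is contained in exactly one maximal cyclic subgroup of Γ₃: there exists a maximal cyclic subgroup H of Γ₃ with K ≤ H, and any two maximal cyclic subgroups of Γ₃ containing K are equal. -/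
/-!
For `x ≠ 1` the elements of `Γ₃` having a nonzero power in `⟨x⟩` form a subgroup `I(x)`, the
isolator of `⟨x⟩`: `(a, b, c)` and `(a', b', c')` commute iff `a b' = a' b`, a condition that
passes from powers to roots, so any two elements of `I(x)` commute. The integral logarithm
`log (a, b, c) = (a, b, 2c - ab)` turns powers into multiples, so `y ↦ log x ⬝ᵥ log y` embeds
`I(x)` into `ℤ` and `I(x)` is cyclic. A cyclic subgroup containing a nontrivial element of an
isolated subgroup `S` lies in `S`, hence an isolated cyclic subgroup containing `⟨x⟩` is the unique
maximal cyclic subgroup containing it.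
-/

/-- The discrete Heisenberg group `Γ₃`: triples `(a,b,c)` of integers, corresponding to the
upper unitriangular matrix `[[1,a,c],[0,1,b],[0,0,1]]`, with multiplication
`(a,b,c)·(a',b',c') = (a+a', b+b', c+c'+a*b')`. -/
@[ext]
structure Heisenberg where
  a : ℤ
  b : ℤ
  c : ℤ

namespace Heisenberg

instance : Mul Heisenberg :=
  ⟨fun x y => ⟨x.a + y.a, x.b + y.b, x.c + y.c + x.a * y.b⟩⟩

instance : One Heisenberg := ⟨⟨0, 0, 0⟩⟩

instance : Inv Heisenberg := ⟨fun x => ⟨-x.a, -x.b, -x.c + x.a * x.b⟩⟩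

theorem mul_def (x y : Heisenberg) :
    x * y = ⟨x.a + y.a, x.b + y.b, x.c + y.c + x.a * y.b⟩ := rfl

theorem one_def : (1 : Heisenberg) = ⟨0, 0, 0⟩ := rfl

theorem inv_def (x : Heisenberg) : x⁻¹ = ⟨-x.a, -x.b, -x.c + x.a * x.b⟩ := rfl

instance : Group Heisenberg where
  mul_assoc x y z := by ext <;> simp [mul_def] <;> ring
  one_mul x := by ext <;> simp [mul_def, one_def]
  mul_one x := by ext <;> simp [mul_def, one_def]
  inv_mul_cancel x := by ext <;> simp [mul_def, inv_def, one_def]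

end Heisenberg

/-- `H` is a maximal cyclic subgroup of `G`: `H` is cyclic and maximal with respect to
inclusion among cyclic subgroups of `G`. -/
def IsMaximalCyclic {G : Type*} [Group G] (H : Subgroup G) : Prop :=
  IsCyclic H ∧ ∀ K : Subgroup G, IsCyclic K → H ≤ K → K = H


namespace Subgroup

variable {G : Type*} [Group G]

def IsIsolated (S : Subgroup G) : Prop :=
  ∀ (y : G) (n : ℤ), n ≠ 0 → y ^ n ∈ S → y ∈ S

variable {K S : Subgroup G}

theorem IsIsolated.le_of_isCyclic (hS : S.IsIsolated) (hK : K ≠ ⊥) (hKS : K ≤ S)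
    {H : Subgroup G} (hH : IsCyclic H) (hKH : K ≤ H) : H ≤ S := by
  obtain ⟨y, rfl⟩ := H.isCyclic_iff_exists_zpowers_eq_top.mp hH
  obtain ⟨k, hk, hk1⟩ := K.bot_or_exists_ne_one.resolve_left hK
  obtain ⟨n, hn⟩ := mem_zpowers_iff.mp (hKH hk)
  have hn0 : n ≠ 0 := by
    rintro rfl
    exact hk1 (by simpa using hn.symm)
  exact zpowers_le.mpr (hS y n hn0 (hn ▸ hKS hk))

theorem IsIsolated.existsUnique_isMaximalCyclic (hS : S.IsIsolated) (hSc : IsCyclic S)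
    (hK : K ≠ ⊥) (hKS : K ≤ S) : ∃! H : Subgroup G, IsMaximalCyclic H ∧ K ≤ H := by
  refine ⟨S, ⟨⟨hSc, fun H hH hSH => ?_⟩, hKS⟩, ?_⟩
  · exact le_antisymm (hS.le_of_isCyclic hK hKS hH (hKS.trans hSH)) hSH
  · rintro H ⟨hHmax, hKH⟩
    exact (hHmax.2 S hSc (hS.le_of_isCyclic hK hKS hHmax.1 hKH)).symm

end Subgroup

namespace Heisenberg

/-- The Mal'cev logarithm `(a, b, c - ab/2)` with its central coordinate doubled to keep it
integral. -/
def log (x : Heisenberg) : Fin 3 → ℤ := ![x.a, x.b, 2 * x.c - x.a * x.b]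

theorem log_injective : Function.Injective log := by
  intro x y h
  have ha := congrFun h 0
  have hb := congrFun h 1
  have hc := congrFun h 2
  simp only [log, Matrix.cons_val] at ha hb hc
  ext <;> grind

theorem log_one : log 1 = 0 := by
  funext i
  fin_cases i <;> simp [log, one_def]

theorem log_inv (x : Heisenberg) : log x⁻¹ = -log x := by
  funext i
  fin_cases i <;> simp [log, inv_def]
  ring

theorem commute_iff {x y : Heisenberg} : Commute x y ↔ x.a * y.b = y.a * x.b := by
  simp only [Commute, SemiconjBy, Heisenberg.ext_iff, mul_def]
  constructor
  · rintro ⟨-, -, h⟩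
    linarith
  · intro h
    refine ⟨add_comm _ _, add_comm _ _, ?_⟩
    linarith

theorem log_mul_of_commute {x y : Heisenberg} (h : Commute x y) :
    log (x * y) = log x + log y := by
  have h' := commute_iff.mp h
  funext i
  fin_cases i <;> simp [log, mul_def]
  linear_combination h'

theorem log_zpow (x : Heisenberg) (n : ℤ) : log (x ^ n) = n • log x := by
  induction n using Int.induction_on with
  | zero => simp [log_one]
  | succ n ih =>
    rw [zpow_add_one, log_mul_of_commute ((Commute.refl x).zpow_left n), ih, add_smul, one_smul]
  | pred n ih =>
    rw [zpow_sub_one, log_mul_of_commute ((Commute.refl x).zpow_left _).inv_right, ih, log_inv,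
      sub_smul, one_smul, sub_eq_add_neg]

theorem zpow_a (x : Heisenberg) (n : ℤ) : (x ^ n).a = n * x.a := by
  simpa [log] using congrFun (log_zpow x n) 0

theorem zpow_b (x : Heisenberg) (n : ℤ) : (x ^ n).b = n * x.b := by
  simpa [log] using congrFun (log_zpow x n) 1

theorem commute_of_commute_zpow {y z : Heisenberg} {n m : ℤ} (hn : n ≠ 0) (hm : m ≠ 0)
    (h : Commute (y ^ n) (z ^ m)) : Commute y z := by
  rw [commute_iff, zpow_a, zpow_a, zpow_b, zpow_b] at h
  rw [commute_iff]
  have : (n * m) * (y.a * z.b - z.a * y.b) = 0 := by linear_combination h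
  linear_combination (mul_eq_zero.mp this).resolve_left (mul_ne_zero hn hm)

theorem commute_of_zpow_mem_zpowers {x y z : Heisenberg} {n m : ℤ} (hn : n ≠ 0) (hm : m ≠ 0)
    (hy : y ^ n ∈ Subgroup.zpowers x) (hz : z ^ m ∈ Subgroup.zpowers x) : Commute y z := by
  obtain ⟨k, hk⟩ := Subgroup.mem_zpowers_iff.mp hy
  obtain ⟨l, hl⟩ := Subgroup.mem_zpowers_iff.mp hz
  exact commute_of_commute_zpow hn hm (hk ▸ hl ▸ Commute.zpow_zpow_self x k l)

def isolator (x : Heisenberg) : Subgroup Heisenberg where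
  carrier := {y | ∃ n : ℤ, n ≠ 0 ∧ y ^ n ∈ Subgroup.zpowers x}
  one_mem' := ⟨1, one_ne_zero, by simp⟩
  mul_mem' := by
    rintro y z ⟨n, hn, hy⟩ ⟨m, hm, hz⟩
    refine ⟨n * m, mul_ne_zero hn hm, ?_⟩
    rw [(commute_of_zpow_mem_zpowers hn hm hy hz).mul_zpow, zpow_mul, mul_comm n, zpow_mul]
    exact mul_mem (zpow_mem hy m) (zpow_mem hz n)
  inv_mem' := by
    rintro y ⟨n, hn, hy⟩
    exact ⟨n, hn, by simpa only [inv_zpow] using inv_mem hy⟩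

theorem zpowers_le_isolator (x : Heisenberg) : Subgroup.zpowers x ≤ isolator x :=
  Subgroup.zpowers_le.mpr ⟨1, one_ne_zero, by simp⟩

theorem isIsolated_isolator (x : Heisenberg) : (isolator x).IsIsolated := by
  rintro y n hn ⟨m, hm, hy⟩
  exact ⟨n * m, mul_ne_zero hn hm, by rwa [zpow_mul]⟩

def isolatorToInt (x : Heisenberg) : isolator x →* Multiplicative ℤ where
  toFun y := Multiplicative.ofAdd (log x ⬝ᵥ log y)
  map_one' := by simp [log_one]
  map_mul' := by
    rintro ⟨y, n, hn, hy⟩ ⟨z, m, hm, hz⟩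
    simp [log_mul_of_commute (commute_of_zpow_mem_zpowers hn hm hy hz), dotProduct_add, ofAdd_add]

theorem isolatorToInt_injective {x : Heisenberg} (hx : x ≠ 1) :
    Function.Injective (isolatorToInt x) := by
  refine (injective_iff_map_eq_one _).mpr ?_
  rintro ⟨y, n, hn, hy⟩ h
  obtain ⟨k, hk⟩ := Subgroup.mem_zpowers_iff.mp hy
  have hlog : n • log y = k • log x := by rw [← log_zpow, ← log_zpow, hk]
  have hxy : log x ⬝ᵥ log y = 0 := h
  have hx0 : log x ≠ 0 := fun h0 => hx (log_injective (h0.trans log_one.symm))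
  have hk0 : k = 0 := by
    have : n * (log x ⬝ᵥ log y) = k * (log x ⬝ᵥ log x) := by
      simpa only [dotProduct_smul, smul_eq_mul] using congrArg (log x ⬝ᵥ ·) hlog
    rw [hxy, mul_zero, eq_comm] at this
    exact (mul_eq_zero.mp this).resolve_right (mt dotProduct_self_eq_zero.mp hx0)
  rw [hk0, zero_smul, smul_eq_zero] at hlog
  exact Subtype.ext (log_injective ((hlog.resolve_left hn).trans log_one.symm))

theorem isCyclic_isolator {x : Heisenberg} (hx : x ≠ 1) : IsCyclic (isolator x) :=
  isCyclic_of_injective _ (isolatorToInt_injective hx)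

end Heisenberg

/-- Every nontrivial cyclic subgroup `K` of the discrete Heisenberg group `Γ₃` is
contained in exactly one maximal cyclic subgroup of `Γ₃`. -/
theorem heisenberg_unique_maximalCyclic (K : Subgroup Heisenberg)
    (hK : K ≠ ⊥) (hcyc : IsCyclic K) :
    ∃! H : Subgroup Heisenberg, IsMaximalCyclic H ∧ K ≤ H := by
  obtain ⟨x, rfl⟩ := K.isCyclic_iff_exists_zpowers_eq_top.mp hcyc
  have hx : x ≠ 1 := by
    rintro rfl
    exact hK Subgroup.zpowers_one_eq_bot
  exact (Heisenberg.isIsolated_isolator x).existsUnique_isMaximalCyclic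
    (Heisenberg.isCyclic_isolator hx) hK (Heisenberg.zpowers_le_isolator x)
end

section
/- Let H be a maximal cyclic subgroup of the discrete Heisenberg group Γ₃ with H ≠ Z(Γ₃), where Z(Γ₃) is the center. Consider the action of Γ₃ on ℝ² given by γ·(x,y) = (x+a, y+b) for γ = [[1,a,c],[0,1,b],[0,0,1]]. Then there is exactly one one-dimensional ℝ-linear subspace L of ℝ² that is invariant under H (i.e. γ·p ∈ L for all γ ∈ H and p ∈ L); moreover this same line L is invariant under the whole normalizer N(H) of H in Γ₃. -/
/-- The action of `γ = (a,b,c) ∈ Γ₃` on `ℝ²` by `γ·(x,y) = (x+a, y+b)`. -/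
def heisenbergAct (γ : Heisenberg) (p : ℝ × ℝ) : ℝ × ℝ :=
  (p.1 + (γ.a : ℝ), p.2 + (γ.b : ℝ))

/-!
Γ₃ acts on ℝ² through its abelianization ℤ², by translations, so a line through the origin is
invariant under a subgroup exactly when it contains the translation vectors of that subgroup.
Maximality forces the generator `g` of `H` to be non-central, so its translation vector `v` is
nonzero and `ℝ ∙ v` is the only invariant line. An element `γ` normalizing `⟨g⟩` conjugates `g`
to some `g ^ k`; comparing translation vectors gives `k = 1`, so `γ` commutes with `g`, and the
commutator of two elements of Γ₃ is the determinant of their translation vectors.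
-/

namespace Heisenberg

theorem mem_center_iff {x : Heisenberg} : x ∈ Subgroup.center Heisenberg ↔ x.a = 0 ∧ x.b = 0 := by
  rw [Subgroup.mem_center_iff]
  refine ⟨fun h => ⟨?_, ?_⟩, fun ⟨ha, hb⟩ y => commute_iff.2 (by simp [ha, hb])⟩
  · simpa using (commute_iff.1 (h ⟨0, 1, 0⟩)).symm
  · simpa using commute_iff.1 (h ⟨1, 0, 0⟩)

theorem zpow_central_generator (k : ℤ) : (⟨0, 0, 1⟩ : Heisenberg) ^ k = ⟨0, 0, k⟩ := by
  induction k using Int.induction_on with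
  | zero => rfl
  | succ n ih => rw [zpow_add_one, ih, mul_def]; simp
  | pred n ih => rw [zpow_sub_one, ih, inv_def, mul_def]; simp [sub_eq_add_neg]

theorem center_eq_zpowers : Subgroup.center Heisenberg = Subgroup.zpowers ⟨0, 0, 1⟩ := by
  ext x
  simp only [mem_center_iff, Subgroup.mem_zpowers_iff, zpow_central_generator,
    Heisenberg.ext_iff]
  exact ⟨fun ⟨ha, hb⟩ => ⟨x.c, ha.symm, hb.symm, rfl⟩, fun ⟨_, ha, hb, _⟩ => ⟨ha.symm, hb.symm⟩⟩

def translation : Heisenberg →* Multiplicative (ℝ × ℝ) where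
  toFun γ := .ofAdd ((γ.a : ℝ), (γ.b : ℝ))
  map_one' := by simp [one_def]
  map_mul' x y := by simp [mul_def, ← ofAdd_add]

theorem toAdd_translation (γ : Heisenberg) : (translation γ).toAdd = ((γ.a : ℝ), (γ.b : ℝ)) :=
  rfl

theorem heisenbergAct_eq_add (γ : Heisenberg) (p : ℝ × ℝ) :
    heisenbergAct γ p = p + (translation γ).toAdd :=
  rfl

theorem toAdd_translation_eq_zero_iff {x : Heisenberg} :
    (translation x).toAdd = 0 ↔ x ∈ Subgroup.center Heisenberg := by
  simp [toAdd_translation, mem_center_iff]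

theorem toAdd_translation_zpow (g : Heisenberg) (k : ℤ) :
    (translation (g ^ k)).toAdd = k • (translation g).toAdd := by
  rw [map_zpow, toAdd_zpow]

theorem commute_of_mem_normalizer_zpowers {g γ : Heisenberg} (hg : g ∉ Subgroup.center Heisenberg)
    (hγ : γ ∈ Subgroup.normalizer (Subgroup.zpowers g : Set Heisenberg)) : Commute γ g := by
  obtain ⟨k, hk⟩ := Subgroup.mem_zpowers_iff.1
    ((Subgroup.mem_normalizer_iff.1 hγ g).1 (Subgroup.mem_zpowers g))
  have hconj : translation (γ * g * γ⁻¹) = translation g := by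
    rw [map_mul, map_mul, map_inv, mul_inv_cancel_comm]
  have hk_smul : k • (translation g).toAdd = (1 : ℤ) • (translation g).toAdd := by
    rw [← toAdd_translation_zpow, hk, hconj, one_smul]
  have hk1 : k = 1 :=
    smul_left_injective ℤ (toAdd_translation_eq_zero_iff.not.2 hg) hk_smul
  rw [hk1, zpow_one, eq_mul_inv_iff_mul_eq] at hk
  exact hk.symm

end Heisenberg

open Heisenberg

theorem Submodule.eq_span_singleton_of_finrank_eq_one {K V : Type*} [DivisionRing K]
    [AddCommGroup V] [Module K V] {L : Submodule K V} (hL : Module.finrank K L = 1) {v : V}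
    (hv : v ≠ 0) (hvL : v ∈ L) : L = K ∙ v :=
  have : FiniteDimensional K L := Module.finite_of_finrank_eq_succ hL
  (eq_of_le_of_finrank_eq ((span_singleton_le_iff_mem _ _).2 hvL)
    (by rw [finrank_span_singleton hv, hL])).symm

theorem Prod.mem_span_singleton_of_mul_eq_mul {K : Type*} [Field K] {v w : K × K} (hv : v ≠ 0)
    (h : w.1 * v.2 = v.1 * w.2) : w ∈ K ∙ v := by
  rw [Submodule.mem_span_singleton]
  by_cases hv₁ : v.1 = 0
  · have hv₂ : v.2 ≠ 0 := fun hv₂ => hv (Prod.ext hv₁ hv₂)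
    have hw₁ : w.1 = 0 := by simpa [hv₁, hv₂] using h
    exact ⟨w.2 / v.2, Prod.ext (by simp [hv₁, hw₁]) (by simp [hv₂])⟩
  · refine ⟨w.1 / v.1, Prod.ext (by simp [hv₁]) ?_⟩
    simp only [Prod.smul_snd, smul_eq_mul]
    field_simp
    linear_combination h

theorem forall_heisenbergAct_mem_iff {γ : Heisenberg} {L : Submodule ℝ (ℝ × ℝ)} :
    (∀ p ∈ L, heisenbergAct γ p ∈ L) ↔ (translation γ).toAdd ∈ L :=
  ⟨fun h => by simpa [heisenbergAct_eq_add] using h 0 L.zero_mem,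
    fun h p hp => heisenbergAct_eq_add γ p ▸ L.add_mem hp h⟩

theorem forall_zpowers_heisenbergAct_mem_iff {g : Heisenberg} {L : Submodule ℝ (ℝ × ℝ)} :
    (∀ γ ∈ Subgroup.zpowers g, ∀ p ∈ L, heisenbergAct γ p ∈ L) ↔ (translation g).toAdd ∈ L := by
  refine ⟨fun h => forall_heisenbergAct_mem_iff.1 (h g (Subgroup.mem_zpowers g)), ?_⟩
  rintro h _ ⟨k, rfl⟩
  rw [forall_heisenbergAct_mem_iff, toAdd_translation_zpow]
  exact L.smul_of_tower_mem k h

/-- For a maximal cyclic subgroup `H ≠ Z(Γ₃)` of the discrete Heisenberg group `Γ₃`,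
acting on `ℝ²` by `γ·(x,y) = (x+a, y+b)`: there is exactly one one-dimensional linear
subspace `L` of `ℝ²` invariant under `H`, and any such line is moreover invariant under
the whole normalizer `N(H)`. -/
theorem heisenberg_invariant_line (H : Subgroup Heisenberg)
    (hmax : IsMaximalCyclic H) (hne : H ≠ Subgroup.center Heisenberg) :
    (∃! L : Submodule ℝ (ℝ × ℝ),
      Module.finrank ℝ L = 1 ∧ ∀ γ ∈ H, ∀ p ∈ L, heisenbergAct γ p ∈ L) ∧
    (∀ L : Submodule ℝ (ℝ × ℝ),
      (Module.finrank ℝ L = 1 ∧ ∀ γ ∈ H, ∀ p ∈ L, heisenbergAct γ p ∈ L) →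
      ∀ γ ∈ Subgroup.normalizer (H : Set Heisenberg), ∀ p ∈ L, heisenbergAct γ p ∈ L) := by
  obtain ⟨hcyclic, hmaximal⟩ := hmax
  obtain ⟨g, rfl⟩ := (Subgroup.isCyclic_iff_exists_zpowers_eq_top H).1 hcyclic
  have hg : g ∉ Subgroup.center Heisenberg := fun hg =>
    hne (hmaximal _ (center_eq_zpowers ▸ inferInstance) (Subgroup.zpowers_le.2 hg)).symm
  have hv : (translation g).toAdd ≠ 0 := toAdd_translation_eq_zero_iff.not.2 hg
  have hunique : ∀ L : Submodule ℝ (ℝ × ℝ), (Module.finrank ℝ L = 1 ∧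
      ∀ γ ∈ Subgroup.zpowers g, ∀ p ∈ L, heisenbergAct γ p ∈ L) →
      L = ℝ ∙ (translation g).toAdd :=
    fun L ⟨hL, hinv⟩ => Submodule.eq_span_singleton_of_finrank_eq_one hL hv
      (forall_zpowers_heisenbergAct_mem_iff.1 hinv)
  refine ⟨⟨_, ⟨finrank_span_singleton hv, forall_zpowers_heisenbergAct_mem_iff.2
    (Submodule.mem_span_singleton_self _)⟩, hunique⟩, fun L hL γ hγ => ?_⟩
  rw [hunique L hL, forall_heisenbergAct_mem_iff]
  have hdet := commute_iff.1 (commute_of_mem_normalizer_zpowers hg hγ)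
  refine Prod.mem_span_singleton_of_mul_eq_mul hv ?_
  simp only [toAdd_translation]
  exact_mod_cast hdet
end

section
/- Let H be a maximal cyclic subgroup of the discrete Heisenberg group Γ₃, and let γ, γ' ∈ Γ₃. Then the following are equivalent: (i) γHγ⁻¹ ⊆ γ'Hγ'⁻¹; (ii) γHγ⁻¹ = γ'Hγ'⁻¹; (iii) γ'⁻¹γ belongs to the normalizer N(H) of H in Γ₃ (equivalently, γ ∈ γ'·N(H)). -/
/-!
Conjugation acts trivially on the abelianization `(a, b) ∈ ℤ²` of `Γ₃`. So if `H = ⟨x⟩` and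
`γ x γ⁻¹ = x ^ k`, then `k • (a, b) = (a, b)` in the torsion-free group `ℤ²`: either `k = 1`, or
`(a, b) = 0` and `x` is central. In both cases `γ x γ⁻¹ = x`, so a conjugate of `H` contained in
`H` equals `H`, which turns inclusion of conjugates into equality.
-/

namespace Subgroup

variable {G : Type*} [Group G] (H : Subgroup G)

theorem map_conj_mul (a b : G) :
    H.map (MulAut.conj (a * b)).toMonoidHom =
      (H.map (MulAut.conj b).toMonoidHom).map (MulAut.conj a).toMonoidHom := by
  rw [map_map]
  congr 1
  ext x
  simp [mul_assoc]

theorem map_conj_le_map_conj_iff (γ γ' : G) :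
    H.map (MulAut.conj γ).toMonoidHom ≤ H.map (MulAut.conj γ').toMonoidHom ↔
      H.map (MulAut.conj (γ'⁻¹ * γ)).toMonoidHom ≤ H := by
  conv_lhs => rw [← mul_inv_cancel_left γ' γ, map_conj_mul]
  exact map_le_map_iff_of_injective (MulAut.conj γ').injective

theorem map_conj_eq_map_conj_iff (γ γ' : G) :
    H.map (MulAut.conj γ).toMonoidHom = H.map (MulAut.conj γ').toMonoidHom ↔
      γ'⁻¹ * γ ∈ normalizer (H : Set G) := by
  rw [mem_normalizer_iff_map_conj_eq]
  conv_lhs => rw [← mul_inv_cancel_left γ' γ, map_conj_mul]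
  exact (map_injective (MulAut.conj γ').injective).eq_iff

end Subgroup

namespace Heisenberg

def toAb : Heisenberg →* Multiplicative (ℤ × ℤ) where
  toFun x := .ofAdd (x.a, x.b)
  map_one' := rfl
  map_mul' _ _ := rfl

theorem toAb_conj (g x : Heisenberg) : toAb (g * x * g⁻¹) = toAb x := by
  rw [map_mul, map_mul, mul_right_comm, map_inv, mul_inv_cancel, one_mul]

theorem conj_eq_self_of_toAb_eq_one {x : Heisenberg} (hx : toAb x = 1) (g : Heisenberg) :
    g * x * g⁻¹ = x := by
  obtain ⟨ha, hb⟩ : x.a = 0 ∧ x.b = 0 := Prod.ext_iff.mp hx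
  ext <;> simp [mul_def, inv_def, ha, hb]
  ring

theorem conj_eq_self_of_conj_mem_zpowers {g x : Heisenberg}
    (h : g * x * g⁻¹ ∈ Subgroup.zpowers x) : g * x * g⁻¹ = x := by
  obtain ⟨k, hk⟩ := h
  by_cases hx : toAb x = 1
  · exact conj_eq_self_of_toAb_eq_one hx g
  have hk1 : k = 1 := by
    have h := congrArg (Multiplicative.toAdd ∘ toAb) hk
    simp only [Function.comp_apply, map_zpow, toAdd_zpow, toAb_conj] at h
    exact smul_left_injective ℤ hx (h.trans (one_smul ℤ _).symm)
  simpa [hk1] using hk.symm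

theorem map_conj_eq_of_map_conj_le {H : Subgroup Heisenberg} (hH : IsCyclic H) {g : Heisenberg}
    (hg : H.map (MulAut.conj g).toMonoidHom ≤ H) : H.map (MulAut.conj g).toMonoidHom = H := by
  obtain ⟨x, rfl⟩ := H.isCyclic_iff_exists_zpowers_eq_top.mp hH
  rw [MonoidHom.map_zpowers, Subgroup.zpowers_le] at hg
  rw [MonoidHom.map_zpowers]
  exact congrArg Subgroup.zpowers (conj_eq_self_of_conj_mem_zpowers hg)

end Heisenberg

/-- For a maximal cyclic subgroup `H` of the discrete Heisenberg group `Γ₃` and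
`γ, γ' ∈ Γ₃`, the following are equivalent: (i) `γHγ⁻¹ ⊆ γ'Hγ'⁻¹`;
(ii) `γHγ⁻¹ = γ'Hγ'⁻¹`; (iii) `γ'⁻¹γ ∈ N(H)`, i.e. `γ ∈ γ'·N(H)`. -/
theorem heisenberg_conj_maximalCyclic (H : Subgroup Heisenberg)
    (hmax : IsMaximalCyclic H) (γ γ' : Heisenberg) :
    (H.map (MulAut.conj γ).toMonoidHom ≤ H.map (MulAut.conj γ').toMonoidHom ↔
        H.map (MulAut.conj γ).toMonoidHom = H.map (MulAut.conj γ').toMonoidHom) ∧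
    (H.map (MulAut.conj γ).toMonoidHom = H.map (MulAut.conj γ').toMonoidHom ↔
        γ'⁻¹ * γ ∈ Subgroup.normalizer (H : Set Heisenberg)) ∧
    (γ'⁻¹ * γ ∈ Subgroup.normalizer (H : Set Heisenberg) ↔ ∃ n ∈ Subgroup.normalizer (H : Set Heisenberg), γ = γ' * n) := by
  have eq_iff_mem_normalizer := H.map_conj_eq_map_conj_iff γ γ'
  refine ⟨⟨fun hle ↦ eq_iff_mem_normalizer.mpr ?_, le_of_eq⟩, eq_iff_mem_normalizer, ?_⟩
  · rw [Subgroup.mem_normalizer_iff_map_conj_eq]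
    exact Heisenberg.map_conj_eq_of_map_conj_le hmax.1 ((H.map_conj_le_map_conj_iff γ γ').mp hle)
  · refine ⟨fun h ↦ ⟨_, h, (mul_inv_cancel_left γ' γ).symm⟩, ?_⟩
    rintro ⟨n, hn, rfl⟩
    rwa [inv_mul_cancel_left]
end
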